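/- Let Γ₀ = (𝒱₀, ℰ₀) be an infinite connected locally finite undirected simple graph, Ω ⊆ 𝒱₀ a finite subset, and Γ = (𝒱, ℰ) an infinite connected locally finite graph which is a local perturbation of Γ₀ within Ω, i.e. 𝒱 \ Ω = 𝒱₀ \ Ω and every edge of Γ or of Γ₀ having at least one endpoint in 𝒱₀ \ Ω belongs to both graphs. Fix λ ∈ ℂ and assume: (a) (exterior unique continuation) every û : 𝒱₀ → ℂ vanishing outside a finite set and satisfying (−Δ_{Γ₀} − λ)û(v) = 0 for all v ∈ 𝒱₀ \ Ω vanishes on 𝒱₀ \ Ω; (b) the finite graph with interior Ω, boundary ∂_{Γ₀}Ω, and the edges of Γ among Ω ∪ ∂_{Γ₀}Ω is connected and satisfies conditions (C-1) and (C-2). Then every u : 𝒱 → ℂ with finite support satisfying (−Δ_{Γ} − λ)u(v) = 0 for all v ∈ 𝒱 vanishes identically. -/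
import Mathlib


open scoped Classical

/-- The degree of a vertex, for an adjacency relation. -/
noncomputable def vdeg {V : Type} (adj : V → V → Prop) (x : V) : ℕ :=
  Nat.card {y : V // adj x y}

/-- The graph Laplacian `(Δu)(v) = (1/deg v) Σ_{w ∼ v} u(w)` for an adjacency relation. -/
noncomputable def glap {V : Type} (adj : V → V → Prop) (u : V → ℂ) (x : V) : ℂ :=
  ((vdeg adj x : ℂ))⁻¹ * ∑' y : {y : V // adj x y}, u y.1

/-- The boundary of a set `Ω` of vertices: the vertices outside `Ω` adjacent to `Ω`. -/
def bdryOf {V : Type} (adj : V → V → Prop) (Ω : Set V) : Set V :=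
  {v | v ∉ Ω ∧ ∃ w ∈ Ω, adj v w}

/-- Walks of a given length staying inside the set `A`. -/
def walkIn {V : Type} (adj : V → V → Prop) (A : Set V) : ℕ → V → V → Prop
  | 0, x, y => x = y
  | n + 1, x, y => ∃ z ∈ A, adj x z ∧ walkIn adj A n z y

/-- The graph distance inside the set `A`. -/
noncomputable def distIn {V : Type} (adj : V → V → Prop) (A : Set V) (x y : V) : ℕ :=
  sInf {n | walkIn adj A n x y}

/-- Condition (C-1) for the finite graph with interior `Ω`, boundary `B` and adjacency `adj`
restricted to `Ω ∪ B`: every boundary vertex is adjacent to exactly one vertex of the graph,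
and this vertex lies in the interior. -/
def SubC1 {V : Type} (adj : V → V → Prop) (Ω B : Set V) : Prop :=
  ∀ z ∈ B, (∃! x, x ∈ Ω ∪ B ∧ adj z x) ∧ ∀ x ∈ Ω ∪ B, adj z x → x ∈ Ω

/-- `x₀` is an extreme point of `S` with respect to the boundary `B`, inside the finite graph
with vertex set `Ω ∪ B`. -/
def SubExtreme {V : Type} (adj : V → V → Prop) (Ω B S : Set V) (x₀ : V) : Prop :=
  x₀ ∈ S ∧ ∃ z ∈ B, ∀ x ∈ S, x ≠ x₀ →
    distIn adj (Ω ∪ B) x₀ z < distIn adj (Ω ∪ B) x z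

/-- Condition (C-2) (two-points condition) for the finite graph with interior `Ω`, boundary `B`
and adjacency `adj` restricted to `Ω ∪ B`. -/
def SubC2 {V : Type} (adj : V → V → Prop) (Ω B : Set V) : Prop :=
  ∀ S : Set V, S ⊆ Ω → 2 ≤ S.ncard →
    ∃ x₀ x₁, x₀ ≠ x₁ ∧ SubExtreme adj Ω B S x₀ ∧ SubExtreme adj Ω B S x₁

/-- Connectedness of the graph with vertex set `A` and adjacency `adj` restricted to `A`. -/
def ConnIn {V : Type} (adj : V → V → Prop) (A : Set V) : Prop :=
  ∀ x ∈ A, ∀ y ∈ A, ∃ n, walkIn adj A n x y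

/-- If the Laplacian of `u` vanishes at `v`, `v` has a neighbour `x₀`, and `u` vanishes at
all neighbours of `v` other than `x₀`, then `u x₀ = 0`. -/
lemma glap_eq_zero_single {V : Type} (adj : V → V → Prop) (u : V → ℂ)
    (v x₀ : V) (h0 : glap adj u v = 0) (hadj : adj v x₀)
    (hfin : {y : V | adj v y}.Finite)
    (hothers : ∀ y, adj v y → y ≠ x₀ → u y = 0) : u x₀ = 0 := by
  have hfin' : Finite {y : V // adj v y} := hfin.to_subtype
  have hne : (Nat.card {y : V // adj v y}) ≠ 0 :=
    Nat.card_ne_zero.mpr ⟨⟨⟨x₀, hadj⟩⟩, hfin'⟩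
  have hsum : ∑' y : {y : V // adj v y}, u y.1 = u x₀ := by
    apply tsum_eq_single (⟨x₀, hadj⟩ : {y : V // adj v y})
    intro b hb
    exact hothers b.1 b.2 (fun h => hb (Subtype.ext h))
  rw [glap, vdeg, hsum] at h0
  rcases mul_eq_zero.mp h0 with h | h
  · exact absurd h (by simp [hne])
  · exact h

/-- Unique continuation from infinity for a local perturbation `Γ` of a graph
`Γ₀` inside a finite set `Ω`: assuming exterior unique continuation for `Γ₀` outside `Ω`, and
that the perturbed finite subgraph with interior `Ω` and boundary `∂_{Γ₀}Ω` is connected and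
satisfies (C-1) and (C-2), every finitely supported solution of `(−Δ_Γ − λ)u = 0` on `𝒱`
vanishes identically. -/
theorem stmt12 {V : Type}
    (V₀ Vt : Set V)                    -- vertex sets of `Γ₀` and `Γ`
    (adj₀ adj : V → V → Prop)          -- adjacency relations of `Γ₀` and `Γ`
    (hsymm₀ : ∀ {x y}, adj₀ x y → adj₀ y x)
    (hirr₀ : ∀ x, ¬ adj₀ x x)
    (hsymm : ∀ {x y}, adj x y → adj y x)
    (hirr : ∀ x, ¬ adj x x)
    (hsupp₀ : ∀ x y, adj₀ x y → x ∈ V₀ ∧ y ∈ V₀)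
    (hsupp : ∀ x y, adj x y → x ∈ Vt ∧ y ∈ Vt)
    (hinf₀ : V₀.Infinite) (hinf : Vt.Infinite)
    (hlf₀ : ∀ x, {y : V | adj₀ x y}.Finite)
    (hlf : ∀ x, {y : V | adj x y}.Finite)
    (hconn₀ : ConnIn adj₀ V₀) (hconn : ConnIn adj Vt)
    (Ω : Set V) (hΩfin : Ω.Finite) (hΩsub : Ω ⊆ V₀)
    (hV : Vt \ Ω = V₀ \ Ω)
    (hedges : ∀ x y, (x ∈ V₀ \ Ω ∨ y ∈ V₀ \ Ω) → (adj x y ↔ adj₀ x y))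
    (lam : ℂ)
    (hext : ∀ u : V → ℂ, ({v ∈ V₀ | u v ≠ 0}).Finite →
      (∀ v ∈ V₀ \ Ω, -(glap adj₀ u v) - lam * u v = 0) → ∀ v ∈ V₀ \ Ω, u v = 0)
    (hsubconn : ConnIn adj (Ω ∪ bdryOf adj₀ Ω))
    (hC1 : SubC1 adj Ω (bdryOf adj₀ Ω))
    (hC2 : SubC2 adj Ω (bdryOf adj₀ Ω)) :
    ∀ u : V → ℂ, ({v ∈ Vt | u v ≠ 0}).Finite →
      (∀ v ∈ Vt, -(glap adj u v) - lam * u v = 0) → ∀ v ∈ Vt, u v = 0 := by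
  intro u hufin heq
  set B := bdryOf adj₀ Ω with hBdef
  have hVmem : ∀ v, v ∈ Vt \ Ω ↔ v ∈ V₀ \ Ω := fun v => by rw [hV]
  -- Step 1: u vanishes on Vt \ Ω
  have hout : ∀ v ∈ Vt \ Ω, u v = 0 := by
    have hfin0 : ({v ∈ V₀ | u v ≠ 0}).Finite := by
      apply Set.Finite.subset (hufin.union hΩfin)
      rintro w ⟨hw, hu⟩
      by_cases hwΩ : w ∈ Ω
      · exact Or.inr hwΩ
      · exact Or.inl ⟨((hVmem w).mpr ⟨hw, hwΩ⟩).1, hu⟩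
    have h0 := hext u hfin0 (by
      intro w hw
      have hwt : w ∈ Vt := ((hVmem w).mpr hw).1
      have heqw := heq w hwt
      have hiff : ∀ y, adj w y = adj₀ w y := fun y => propext (hedges w y (Or.inl hw))
      have hgl : glap adj₀ u w = glap adj u w := by
        have h2 : adj w = adj₀ w := funext fun y => hiff y
        rw [glap, glap, vdeg, vdeg, h2]
      rw [hgl]; exact heqw)
    intro w hw
    exact h0 w ((hVmem w).mp hw)
  -- boundary vertices are in Vt \ Ω
  have hBsub : B ⊆ Vt \ Ω := by
    rintro z ⟨hzΩ, w, hwΩ, hadjzw⟩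
    exact (hVmem z).mpr ⟨(hsupp₀ z w hadjzw).1, hzΩ⟩
  -- Step 2: for z ∈ B, u vanishes at every vertex of Ω ∪ B adjacent to z
  have hF2 : ∀ z ∈ B, ∀ x, x ∈ Ω ∪ B → adj z x → u x = 0 := by
    intro z hz x hx hadjzx
    have hzVt := hBsub hz
    have heqz := heq z hzVt.1
    rw [hout z hzVt] at heqz
    have hglz : glap adj u z = 0 := by linear_combination -heqz
    obtain ⟨⟨x', hpx', huniq⟩, hintoΩ⟩ := hC1 z hz
    apply glap_eq_zero_single adj u z x hglz hadjzx (hlf z)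
    intro y hy hyx
    by_cases hyΩ : y ∈ Ω ∪ B
    · exfalso
      have h1 : y = x' := huniq y ⟨hyΩ, hy⟩
      have h2 : x = x' := huniq x ⟨hx, hadjzx⟩
      exact hyx (h1.trans h2.symm)
    · have hyVt : y ∈ Vt := (hsupp z y hy).2
      have hyΩ' : y ∉ Ω := fun h => hyΩ (Or.inl h)
      exact hout y ⟨hyVt, hyΩ'⟩
  -- Step 3: walks crossing out of Ω pass through the boundary
  have hcross : ∀ n x y, x ∈ Ω → y ∉ Ω → walkIn adj₀ V₀ n x y → ∃ z, z ∈ B := by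
    intro n
    induction n with
    | zero =>
      intro x y hx hy hw
      have hxy : x = y := hw
      exact absurd (hxy ▸ hx) hy
    | succ n ih =>
      intro x y hx hy hw
      obtain ⟨w, hwV, hadjw, hwalk⟩ := hw
      by_cases hwΩ : w ∈ Ω
      · exact ih w y hwΩ hy hwalk
      · exact ⟨w, hwΩ, x, hx, hsymm₀ hadjw⟩
  set S := {v ∈ Ω | u v ≠ 0} with hSdef
  -- Step 4: an extreme point of the support would vanish: contradiction
  have hkey : ∀ x₀ ∈ S, ∀ z ∈ B,
      (∀ x ∈ S, x ≠ x₀ → distIn adj (Ω ∪ B) x₀ z < distIn adj (Ω ∪ B) x z) → False := by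
    intro x₀ hx₀ z hz hmin
    obtain ⟨hx₀Ω, hux₀⟩ := hx₀
    obtain ⟨m, hm⟩ := hsubconn x₀ (Or.inl hx₀Ω) z (Or.inr hz)
    have hne0 : {n | walkIn adj (Ω ∪ B) n x₀ z}.Nonempty := ⟨m, hm⟩
    have hnmem : walkIn adj (Ω ∪ B) (distIn adj (Ω ∪ B) x₀ z) x₀ z := by
      unfold distIn; exact Nat.sInf_mem hne0
    cases hd : distIn adj (Ω ∪ B) x₀ z with
    | zero =>
      rw [hd] at hnmem
      exact hz.1 ((show x₀ = z from hnmem) ▸ hx₀Ω)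
    | succ k =>
      rw [hd] at hnmem
      obtain ⟨v₁, hv₁A, hadjx₀v₁, hwalk⟩ := hnmem
      have hdv₁ : distIn adj (Ω ∪ B) v₁ z ≤ k := by
        unfold distIn; exact Nat.sInf_le hwalk
      have hux₀0 : u x₀ = 0 := by
        rcases hv₁A with hv₁Ω | hv₁B
        · -- v₁ interior
          have hv₁Vt : v₁ ∈ Vt := (hsupp x₀ v₁ hadjx₀v₁).2
          have huv₁ : u v₁ = 0 := by
            by_contra h
            have hne : v₁ ≠ x₀ := by
              intro h'
              rw [h', hd] at hdv₁
              omega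
            have := hmin v₁ ⟨hv₁Ω, h⟩ hne
            rw [hd] at this
            omega
          have heqv₁ := heq v₁ hv₁Vt
          rw [huv₁] at heqv₁
          have hgl : glap adj u v₁ = 0 := by linear_combination -heqv₁
          apply glap_eq_zero_single adj u v₁ x₀ hgl (hsymm hadjx₀v₁) (hlf v₁)
          intro y hy hyx₀
          by_cases hyΩ : y ∈ Ω
          · by_contra huy
            have hlt := hmin y ⟨hyΩ, huy⟩ hyx₀
            have hwy : walkIn adj (Ω ∪ B) (k + 1) y z :=
              ⟨v₁, Or.inl hv₁Ω, hsymm hy, hwalk⟩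
            have hle : distIn adj (Ω ∪ B) y z ≤ k + 1 := by
              unfold distIn; exact Nat.sInf_le hwy
            rw [hd] at hlt
            omega
          · exact hout y ⟨(hsupp v₁ y hy).2, hyΩ⟩
        · -- v₁ boundary
          exact hF2 v₁ hv₁B x₀ (Or.inl hx₀Ω) (hsymm hadjx₀v₁)
      exact hux₀ hux₀0
  -- Step 5: S is empty
  have hS : S = ∅ := by
    by_contra h
    obtain ⟨v, hv⟩ := Set.nonempty_iff_ne_empty.mpr h
    obtain ⟨zB, hzB⟩ : ∃ z, z ∈ B := by
      obtain ⟨w, hw⟩ := (hinf₀.diff hΩfin).nonempty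
      obtain ⟨n, hn⟩ := hconn₀ v (hΩsub hv.1) w hw.1
      exact hcross n v w hv.1 hw.2 hn
    by_cases hcard : 2 ≤ S.ncard
    · obtain ⟨x₀, x₁, hne01, hex₀, _⟩ := hC2 S (fun x hx => hx.1) hcard
      obtain ⟨hx₀S, z, hzB', hmin⟩ := hex₀
      exact hkey x₀ hx₀S z hzB' hmin
    · have hSfin : S.Finite := hΩfin.subset (fun x hx => hx.1)
      have hsingle : ∀ x ∈ S, x = v := by
        intro x hx
        by_contra hxv
        have hsub : ({x, v} : Set V) ⊆ S := by
          rintro y (rfl | rfl)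
          exacts [hx, hv]
        have h2 : ({x, v} : Set V).ncard = 2 := Set.ncard_pair hxv
        have := Set.ncard_le_ncard hsub hSfin
        omega
      exact hkey v hv zB hzB (fun x hx hxv => absurd (hsingle x hx) hxv)
  -- conclusion
  intro v hv
  by_cases hvΩ : v ∈ Ω
  · by_contra h
    exact (hS ▸ (⟨hvΩ, h⟩ : v ∈ S) : v ∈ (∅ : Set V))
  · exact hout v ⟨hv, hvΩ⟩
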